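/- Let q be an even prime power and F = GF(q). Let W be the 4-dimensional subspace of quadratic forms over F spanned by X0X1, X0X2, X1^2 and X2^2 (the web of conics associated with the line-orbit o_{8,3}). Then among the conics of W there are exactly q+1 double lines, exactly q^2+q pairs of real lines, no pairs of imaginary lines, and exactly q^3−q nonsingular conics. -/

import Mathlib

open Matrix

namespace Conics

/-- Coefficient vector (a0,...,a5) of the product of two linear forms
`(b0*X0+b1*X1+b2*X2)*(c0*X0+c1*X1+c2*X2)`, where the quadratic form with
coefficient vector `a` is `a0*X0^2 + a1*X0*X1 + a2*X0*X2 + a3*X1^2 + a4*X1*X2 + a5*X2^2`. -/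
def mulLin {F : Type} [Field F] (b c : Fin 3 → F) : Fin 6 → F :=
  ![b 0 * c 0, b 0 * c 1 + b 1 * c 0, b 0 * c 2 + b 2 * c 0,
    b 1 * c 1, b 1 * c 2 + b 2 * c 1, b 2 * c 2]

/-- The discriminant of the quadratic form with coefficient vector `a`. -/
def disc {F : Type} [Field F] (a : Fin 6 → F) : F :=
  4 * a 0 * a 3 * a 5 + a 1 * a 2 * a 4 - a 0 * a 4 ^ 2 - a 3 * a 2 ^ 2 - a 5 * a 1 ^ 2

/-- `f_a` is a double line: `f_a = c * l^2` for a nonzero scalar `c` and nonzero linear form `l`. -/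
def IsDoubleLine {F : Type} [Field F] (a : Fin 6 → F) : Prop :=
  ∃ (c : F) (l : Fin 3 → F), c ≠ 0 ∧ l ≠ 0 ∧ a = c • mulLin l l

/-- `f_a` is a pair of (distinct) real lines: `f_a = l1 * l2` with neither linear form a scalar
multiple of the other. -/
def IsRealPair {F : Type} [Field F] (a : Fin 6 → F) : Prop :=
  ∃ l1 l2 : Fin 3 → F, (¬ ∃ t : F, l2 = t • l1) ∧ (¬ ∃ t : F, l1 = t • l2) ∧ a = mulLin l1 l2

/-- `f_a` is a pair of conjugate imaginary lines: singular, but not a product of two linear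
forms over `F`. -/
def IsImagPair {F : Type} [Field F] (a : Fin 6 → F) : Prop :=
  disc a = 0 ∧ ¬ ∃ l1 l2 : Fin 3 → F, a = mulLin l1 l2

/-- `f_a` is a nonsingular conic. -/
def IsNonsingular {F : Type} [Field F] (a : Fin 6 → F) : Prop :=
  disc a ≠ 0

/-- The number of conics of a given type `T` in a linear system `W` (a subspace of the space of
quadratic forms, identified with `F^6`): the number of 1-dimensional subspaces `⟨a⟩` of `W`,
`a ≠ 0`, such that `f_a` has type `T`. -/
noncomputable def numConics {F : Type} [Field F] (W : Submodule F (Fin 6 → F))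
    (T : (Fin 6 → F) → Prop) : ℕ :=
  Set.ncard {P : Submodule F (Fin 6 → F) |
    ∃ a : Fin 6 → F, a ≠ 0 ∧ a ∈ W ∧ T a ∧ P = Submodule.span F {a}}

/-- The symmetric 3×3 matrix associated with a point `y` of `PG(5,q)`. -/
def M {F : Type} [Field F] (y : Fin 6 → F) : Matrix (Fin 3) (Fin 3) F :=
  !![y 0, y 1, y 2; y 1, y 3, y 4; y 2, y 4, y 5]

/-- The pairing `B(a,y) = a0*y0 + ... + a5*y5`. -/
def Bform {F : Type} [Field F] (a y : Fin 6 → F) : F :=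
  a 0 * y 0 + a 1 * y 1 + a 2 * y 2 + a 3 * y 3 + a 4 * y 4 + a 5 * y 5

/-- The squab of conics associated with a (nonzero) point `y`: the hyperplane
`{a : B(a,y) = 0}` of the space of quadratic forms. -/
def squab {F : Type} [Field F] (y : Fin 6 → F) : Submodule F (Fin 6 → F) where
  carrier := {a | Bform a y = 0}
  add_mem' := by
    intro a b ha hb
    simp only [Set.mem_setOf_eq, Bform, Pi.add_apply] at *
    linear_combination ha + hb
  zero_mem' := by simp [Bform]
  smul_mem' := by
    intro c a ha
    simp only [Set.mem_setOf_eq, Bform, Pi.smul_apply, smul_eq_mul] at *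
    linear_combination c * ha

/-!
In characteristic 2 every form of the web is `X0 * L + M ^ 2` with `L = a1 X1 + a2 X2` and
`M = √a3 X1 + √a5 X2`, and its discriminant is `det (L, M) ^ 2`. It is the double line `M ^ 2`
when `L = 0`, the pair of real lines `L * (X0 + c ^ 2 L)` when `M = c L`, and nonsingular when
`L, M` are independent; in particular it is never a pair of imaginary lines. Counting pairs
`(L, M)` gives `q ^ 2 - 1`, `(q ^ 2 - 1) q` and `(q ^ 2 - 1) (q ^ 2 - q)` forms of the three
types, and each conic is represented by exactly `q - 1` forms.
-/

open scoped LinearAlgebra.Projectivization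

theorem ncard_image_span_singleton_mul_card_units {K V : Type*} [Field K] [AddCommGroup V]
    [Module K V] {S : Set V} (h0 : 0 ∉ S) (hS : ∀ v ∈ S, ∀ t : K, t ≠ 0 → t • v ∈ S) :
    ((K ∙ ·) '' S).ncard * Nat.card Kˣ = S.ncard := by
  have hne : ∀ {v}, v ∈ S → v ≠ 0 := fun hv h => h0 (h ▸ hv)
  have hmem : ∀ v (hv : v ≠ 0), (Projectivization.mk K v hv).rep ∈ S ↔ v ∈ S := by
    intro v hv
    obtain ⟨t, ht⟩ := Projectivization.exists_smul_eq_mk_rep K v hv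
    refine ⟨fun h => ?_, fun h => ht ▸ hS v h t t.ne_zero⟩
    have := hS _ h ↑t⁻¹ (Units.ne_zero _)
    rwa [← ht, ← Units.smul_def, inv_smul_smul] at this
  have himage : (K ∙ ·) '' S = Projectivization.submodule '' {p | p.rep ∈ S} := by
    ext P
    constructor
    · rintro ⟨v, hv, rfl⟩
      exact ⟨Projectivization.mk K v (hne hv), (hmem v _).2 hv, Projectivization.submodule_mk v _⟩
    · rintro ⟨p, hp, rfl⟩
      exact ⟨p.rep, hp, p.submodule_eq.symm⟩
  let e : S ≃ {p : ℙ K V // p.rep ∈ S} × Kˣ :=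
    (Equiv.subtypeSubtypeEquivSubtype hne).symm.trans
      (((Projectivization.nonZeroEquivProjectivizationProdUnits K V).subtypeEquiv
        (fun v => (hmem v.1 v.2).symm)).trans Equiv.prodSubtypeFstEquivSubtypeProd)
  rw [himage, Set.ncard_image_of_injective _ Projectivization.submodule_injective,
    ← Nat.card_coe_set_eq, ← Nat.card_coe_set_eq, ← Nat.card_prod]
  exact (Nat.card_congr e).symm

section Field

variable {F : Type} [Field F]

theorem numConics_mul_card_units (W : Submodule F (Fin 6 → F)) {T : (Fin 6 → F) → Prop}
    (hT : ∀ a, T a → ∀ t : F, t ≠ 0 → T (t • a)) :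
    numConics W T * Nat.card Fˣ = {a | a ≠ 0 ∧ a ∈ W ∧ T a}.ncard := by
  set S := {a | a ≠ 0 ∧ a ∈ W ∧ T a}
  have hS : ∀ a ∈ S, ∀ t : F, t ≠ 0 → t • a ∈ S :=
    fun a ⟨ha0, haW, haT⟩ t ht => ⟨smul_ne_zero ht ha0, W.smul_mem t haW, hT a haT t ht⟩
  rw [numConics, ← ncard_image_span_singleton_mul_card_units (by simp [S]) hS]
  congr 2
  ext P
  simp only [S, Set.mem_ofPred_eq, Set.mem_image]
  exact exists_congr fun a => by tauto

theorem mulLin_smul_left (t : F) (b c : Fin 3 → F) : mulLin (t • b) c = t • mulLin b c := by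
  ext i; fin_cases i <;> simp [mulLin, mul_assoc, mul_add]

theorem disc_smul (t : F) (a : Fin 6 → F) : disc (t • a) = t ^ 3 * disc a := by
  simp only [disc, Pi.smul_apply, smul_eq_mul]; ring

theorem disc_mulLin (b c : Fin 3 → F) : disc (mulLin b c) = 0 := by
  simp only [disc, mulLin, cons_val_zero, cons_val_one, cons_val]
  ring

theorem IsDoubleLine.smul {a : Fin 6 → F} (h : IsDoubleLine a) {t : F} (ht : t ≠ 0) :
    IsDoubleLine (t • a) := by
  obtain ⟨c, l, hc, hl, rfl⟩ := h
  exact ⟨t * c, l, mul_ne_zero ht hc, hl, smul_smul t c _⟩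

theorem IsRealPair.smul {a : Fin 6 → F} (h : IsRealPair a) {t : F} (ht : t ≠ 0) :
    IsRealPair (t • a) := by
  obtain ⟨l1, l2, h21, h12, rfl⟩ := h
  refine ⟨t • l1, l2, ?_, ?_, (mulLin_smul_left t l1 l2).symm⟩
  · rintro ⟨s, hs⟩
    exact h21 ⟨s * t, by rw [hs, smul_smul]⟩
  · rintro ⟨s, hs⟩
    exact h12 ⟨t⁻¹ * s, by rw [mul_smul, ← hs, inv_smul_smul₀ ht]⟩

theorem IsNonsingular.smul {a : Fin 6 → F} (h : IsNonsingular a) {t : F} (ht : t ≠ 0) :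
    IsNonsingular (t • a) := by
  rw [IsNonsingular, disc_smul]
  exact mul_ne_zero (pow_ne_zero 3 ht) h

theorem exists_smul_or_exists_smul_of_cross_eq_zero {v w : Fin 3 → F} (h : v ⨯₃ w = 0) :
    (∃ t : F, w = t • v) ∨ ∃ t : F, v = t • w := by
  by_cases hv : v = 0
  · exact Or.inr ⟨0, by simp [hv]⟩
  rw [← not_ne_iff, crossProduct_ne_zero_iff_linearIndependent,
    LinearIndependent.pair_iff' hv] at h
  push Not at h
  obtain ⟨t, ht⟩ := h
  exact Or.inl ⟨t, ht.symm⟩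

theorem not_linearIndependent_iff_row_eq_smul {V : Type*} [AddCommGroup V] [Module F V]
    {A : Fin 2 → V} (h0 : A 0 ≠ 0) :
    ¬ LinearIndependent F A ↔ ∃ c : F, A 1 = c • A 0 := by
  rw [show A = ![A 0, A 1] by ext i; fin_cases i <;> rfl, LinearIndependent.pair_iff' h0]
  simp [eq_comm]

theorem linearIndependent_iff_det_ne_zero {n : Type*} [Fintype n] [DecidableEq n]
    {A : n → n → F} :
    LinearIndependent F A ↔ (Matrix.of A).det ≠ 0 := by
  rw [← isUnit_iff_ne_zero, ← Matrix.isUnit_iff_isUnit_det,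
    ← Matrix.linearIndependent_rows_iff_isUnit]
  rfl

def o83Web (F : Type) [Field F] : Submodule F (Fin 6 → F) :=
  Submodule.span F {![0, 1, 0, 0, 0, 0], ![0, 0, 1, 0, 0, 0], ![0, 0, 0, 1, 0, 0],
    ![0, 0, 0, 0, 0, 1]}

theorem mem_o83Web_iff {a : Fin 6 → F} : a ∈ o83Web F ↔ a 0 = 0 ∧ a 4 = 0 := by
  constructor
  · intro h
    induction h using Submodule.span_induction with
    | mem x hx =>
      simp only [Set.mem_insert_iff, Set.mem_singleton_iff] at hx
      rcases hx with rfl | rfl | rfl | rfl <;> simp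
    | zero => simp
    | add x y _ _ hx hy => simp [hx.1, hx.2, hy.1, hy.2]
    | smul t x _ hx => simp [hx.1, hx.2]
  · rintro ⟨h0, h4⟩
    have ha : a = a 1 • ![0, 1, 0, 0, 0, 0] + a 2 • ![0, 0, 1, 0, 0, 0]
        + a 3 • ![0, 0, 0, 1, 0, 0] + a 5 • ![0, 0, 0, 0, 0, 1] := by
      ext i; fin_cases i <;> simp [h0, h4]
    rw [ha]
    refine add_mem (add_mem (add_mem ?_ ?_) ?_) ?_ <;>
      exact Submodule.smul_mem _ _ (Submodule.subset_span (by simp))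

/-- In characteristic 2, `webForm A` is `X0 * L + M ^ 2` for the linear forms `L, M` in `X1, X2`
with coefficient rows `A 0, A 1`. -/
def webForm (A : Fin 2 → Fin 2 → F) : Fin 6 → F :=
  ![0, A 0 0, A 0 1, A 1 0 ^ 2, 0, A 1 1 ^ 2]

theorem charP_two_of_even_card [Fintype F] (h : Even (Fintype.card F)) : CharP F 2 :=
  ringChar.of_eq (FiniteField.even_card_iff_char_two.mpr (Nat.even_iff.mp h))

section Counting

variable [Fintype F]

theorem eq_of_mul_card_units_eq {n N : ℕ} (h : n * Nat.card Fˣ = N * (Fintype.card F - 1)) :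
    n = N := by
  have := Fintype.one_lt_card (α := F)
  rw [Nat.card_units, Nat.card_eq_fintype_card] at h
  exact Nat.eq_of_mul_eq_mul_right (by omega) h

theorem ncard_ne_zero_fin (n : ℕ) : {v : Fin n → F | v ≠ 0}.ncard = Fintype.card F ^ n - 1 := by
  rw [show {v : Fin n → F | v ≠ 0} = {0}ᶜ from rfl, Set.ncard_compl, Set.ncard_singleton,
    Nat.card_eq_fintype_card, Fintype.card_fun, Fintype.card_fin]

theorem ncard_row_zero :
    {A : Fin 2 → Fin 2 → F | A 0 = 0 ∧ A 1 ≠ 0}.ncard = Fintype.card F ^ 2 - 1 := by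
  have : {A : Fin 2 → Fin 2 → F | A 0 = 0 ∧ A 1 ≠ 0} = (fun v => ![0, v]) '' {v | v ≠ 0} := by
    ext A
    constructor
    · rintro ⟨h0, h1⟩
      refine ⟨A 1, h1, funext fun i => ?_⟩
      fin_cases i
      exacts [h0.symm, rfl]
    · rintro ⟨v, hv, rfl⟩
      exact ⟨rfl, hv⟩
  rw [this, Set.ncard_image_of_injective _ (fun v w h => congrFun h 1), ncard_ne_zero_fin 2]

theorem ncard_dependent_rows :
    {A : Fin 2 → Fin 2 → F | A 0 ≠ 0 ∧ ¬ LinearIndependent F A}.ncard =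
      (Fintype.card F ^ 2 - 1) * Fintype.card F := by
  set f : (Fin 2 → F) × F → Fin 2 → Fin 2 → F := fun p => ![p.1, p.2 • p.1]
  have himage : {A | A 0 ≠ 0 ∧ ¬ LinearIndependent F A} = f '' ({v | v ≠ 0} ×ˢ Set.univ) := by
    ext A
    constructor
    · rintro ⟨h0, hdep⟩
      obtain ⟨c, hc⟩ := (not_linearIndependent_iff_row_eq_smul h0).mp hdep
      refine ⟨(A 0, c), ⟨h0, trivial⟩, funext fun i => ?_⟩
      fin_cases i
      exacts [rfl, hc.symm]
    · rintro ⟨⟨v, c⟩, ⟨hv, -⟩, rfl⟩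
      exact ⟨hv, (not_linearIndependent_iff_row_eq_smul (A := ![v, c • v]) hv).mpr ⟨c, rfl⟩⟩
  have hinj : Set.InjOn f ({v | v ≠ 0} ×ˢ Set.univ) := by
    rintro ⟨v, c⟩ ⟨hv, -⟩ ⟨w, d⟩ - h
    obtain rfl : v = w := congrFun h 0
    exact Prod.ext rfl (smul_left_injective F hv (congrFun h 1))
  rw [himage, hinj.ncard_image, Set.ncard_prod, ncard_ne_zero_fin 2,
    Set.ncard_univ, Nat.card_eq_fintype_card]

theorem ncard_linearIndependent_rows :
    {A : Fin 2 → Fin 2 → F | LinearIndependent F A}.ncard =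
      (Fintype.card F ^ 2 - 1) * (Fintype.card F ^ 2 - Fintype.card F) := by
  rw [← Nat.card_coe_set_eq, Set.coe_ofPred, card_linearIndependent (by simp),
    Module.finrank_fin_fun, Fin.prod_univ_two]
  simp

end Counting

end Field

section CharTwo

variable {F : Type} [Field F] [CharP F 2]

theorem webForm_injective : Function.Injective (webForm (F := F)) := by
  intro A B h
  have h1 := congrFun h 1; have h2 := congrFun h 2; have h3 := congrFun h 3
  have h5 := congrFun h 5
  simp only [webForm, Matrix.cons_val] at h1 h2 h3 h5
  ext i j
  fin_cases i <;> fin_cases j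
  exacts [h1, h2, CharTwo.sq_injective h3, CharTwo.sq_injective h5]

theorem webForm_eq_zero_iff {A : Fin 2 → Fin 2 → F} : webForm A = 0 ↔ A = 0 :=
  webForm_injective.eq_iff' (by ext i; fin_cases i <;> simp [webForm])

theorem disc_webForm (A : Fin 2 → Fin 2 → F) : disc (webForm A) = -(Matrix.of A).det ^ 2 := by
  simp only [disc, webForm, det_fin_two, of_apply, cons_val_zero, cons_val_one, cons_val]
  linear_combination -(A 0 0 * A 0 1 * A 1 0 * A 1 1) * (CharTwo.two_eq_zero : (2 : F) = 0)

theorem disc_webForm_eq_zero_iff {A : Fin 2 → Fin 2 → F} :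
    disc (webForm A) = 0 ↔ ¬ LinearIndependent F A := by
  simp [disc_webForm, linearIndependent_iff_det_ne_zero]

theorem webForm_of_row_zero {A : Fin 2 → Fin 2 → F} (h : A 0 = 0) :
    webForm A = mulLin ![0, A 1 0, A 1 1] ![0, A 1 0, A 1 1] := by
  have h0 : A 0 0 = 0 := congrFun h 0
  have h1 : A 0 1 = 0 := congrFun h 1
  ext i; fin_cases i <;>
    simp [webForm, mulLin, h0, h1, sq, mul_comm (A 1 1), CharTwo.add_self_eq_zero]

theorem webForm_of_row_eq_smul {A : Fin 2 → Fin 2 → F} {c : F} (h : A 1 = c • A 0) :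
    webForm A = mulLin ![0, A 0 0, A 0 1] ![1, c ^ 2 * A 0 0, c ^ 2 * A 0 1] := by
  have h0 : A 1 0 = c * A 0 0 := congrFun h 0
  have h1 : A 1 1 = c * A 0 1 := congrFun h 1
  ext i; fin_cases i <;> simp [webForm, mulLin, h0, h1, sq, mul_assoc, mul_comm, mul_left_comm,
    CharTwo.add_self_eq_zero]

theorem isDoubleLine_webForm_iff {A : Fin 2 → Fin 2 → F} :
    IsDoubleLine (webForm A) ↔ A 0 = 0 ∧ A 1 ≠ 0 := by
  constructor
  · rintro ⟨c, l, hc, hl, h⟩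
    have e0 : 0 = c * (l 0 * l 0) := congrFun h 0
    have e1 : A 0 0 = c * (l 0 * l 1 + l 1 * l 0) := congrFun h 1
    have e2 : A 0 1 = c * (l 0 * l 2 + l 2 * l 0) := congrFun h 2
    have e3 : A 1 0 ^ 2 = c * (l 1 * l 1) := congrFun h 3
    have e5 : A 1 1 ^ 2 = c * (l 2 * l 2) := congrFun h 5
    have hl0 : l 0 = 0 := by simpa [hc] using e0.symm
    refine ⟨?_, fun hA1 => hl ?_⟩
    · ext j; fin_cases j
      · simpa [hl0] using e1
      · simpa [hl0] using e2
    · have hA10 : A 1 0 = 0 := congrFun hA1 0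
      have hA11 : A 1 1 = 0 := congrFun hA1 1
      ext j; fin_cases j
      · exact hl0
      · simpa [hA10, hc] using e3.symm
      · simpa [hA11, hc] using e5.symm
  · rintro ⟨hA0, hA1⟩
    refine ⟨1, ![0, A 1 0, A 1 1], one_ne_zero, fun hl => hA1 ?_, by
      rw [one_smul]; exact webForm_of_row_zero hA0⟩
    ext j; fin_cases j
    exacts [congrFun hl 1, congrFun hl 2]

theorem isRealPair_webForm_iff {A : Fin 2 → Fin 2 → F} :
    IsRealPair (webForm A) ↔ A 0 ≠ 0 ∧ ¬ LinearIndependent F A := by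
  constructor
  · rintro ⟨l1, l2, h21, h12, h⟩
    refine ⟨fun hA0 => ?_, disc_webForm_eq_zero_iff.mp (h ▸ disc_mulLin l1 l2)⟩
    have e1 : A 0 0 = l1 0 * l2 1 + l1 1 * l2 0 := congrFun h 1
    have e2 : A 0 1 = l1 0 * l2 2 + l1 2 * l2 0 := congrFun h 2
    have e4 : 0 = l1 1 * l2 2 + l1 2 * l2 1 := congrFun h 4
    have h00 : A 0 0 = 0 := congrFun hA0 0
    have h01 : A 0 1 = 0 := congrFun hA0 1
    have two : (2 : F) = 0 := CharTwo.two_eq_zero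
    have hcross : l1 ⨯₃ l2 = 0 := by
      simp only [cross_apply, cons_eq_zero_iff, zero_empty, and_true]
      refine ⟨?_, ?_, ?_⟩
      · linear_combination -e4 - l1 2 * l2 1 * two
      · linear_combination h01 - e2 - l1 0 * l2 2 * two
      · linear_combination h00 - e1 - l1 1 * l2 0 * two
    rcases exists_smul_or_exists_smul_of_cross_eq_zero hcross with h' | h'
    exacts [h21 h', h12 h']
  · rintro ⟨hA0, hdep⟩
    obtain ⟨c, hc⟩ := (not_linearIndependent_iff_row_eq_smul hA0).mp hdep
    refine ⟨_, _, ?_, ?_, webForm_of_row_eq_smul hc⟩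
    · rintro ⟨t, ht⟩
      simpa using congrFun ht 0
    · rintro ⟨t, ht⟩
      have ht0 : t = 0 := by simpa using (congrFun ht 0).symm
      refine hA0 (funext fun j => ?_)
      fin_cases j
      · simpa [ht0] using congrFun ht 1
      · simpa [ht0] using congrFun ht 2

theorem not_isImagPair_webForm (A : Fin 2 → Fin 2 → F) : ¬ IsImagPair (webForm A) := by
  rintro ⟨hd, hnot⟩
  rw [disc_webForm_eq_zero_iff] at hd
  by_cases hA0 : A 0 = 0
  · exact hnot ⟨_, _, webForm_of_row_zero hA0⟩
  · obtain ⟨c, hc⟩ := (not_linearIndependent_iff_row_eq_smul hA0).mp hd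
    exact hnot ⟨_, _, webForm_of_row_eq_smul hc⟩

theorem range_webForm [Finite F] : Set.range (webForm (F := F)) = o83Web F := by
  ext a
  rw [SetLike.mem_coe, mem_o83Web_iff]
  constructor
  · rintro ⟨A, rfl⟩
    exact ⟨rfl, rfl⟩
  · rintro ⟨h0, h4⟩
    obtain ⟨r, hr⟩ := FiniteField.isSquare_of_char_two (ringChar.eq F 2) (a 3)
    obtain ⟨s, hs⟩ := FiniteField.isSquare_of_char_two (ringChar.eq F 2) (a 5)
    refine ⟨![![a 1, a 2], ![r, s]], ?_⟩
    ext i; fin_cases i <;> simp [webForm, h0, h4, hr, hs, sq]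

theorem numConics_o83Web_mul_card_units [Finite F] {T : (Fin 6 → F) → Prop}
    (hT : ∀ a, T a → ∀ t : F, t ≠ 0 → T (t • a)) :
    numConics (o83Web F) T * Nat.card Fˣ = {A | A ≠ 0 ∧ T (webForm A)}.ncard := by
  have himage : {a | a ≠ 0 ∧ a ∈ o83Web F ∧ T a} = webForm '' {A | A ≠ 0 ∧ T (webForm A)} := by
    ext a
    constructor
    · rintro ⟨ha0, haW, haT⟩
      obtain ⟨A, rfl⟩ : a ∈ Set.range webForm := by rwa [range_webForm]
      exact ⟨A, ⟨mt webForm_eq_zero_iff.mpr ha0, haT⟩, rfl⟩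
    · rintro ⟨A, ⟨hA0, hAT⟩, rfl⟩
      refine ⟨mt webForm_eq_zero_iff.mp hA0, ?_, hAT⟩
      rw [← SetLike.mem_coe, ← range_webForm]
      exact Set.mem_range_self A
  rw [numConics_mul_card_units _ hT, himage, Set.ncard_image_of_injective _ webForm_injective]

variable [Fintype F]

theorem numConics_o83Web_isDoubleLine :
    numConics (o83Web F) IsDoubleLine = Fintype.card F + 1 := by
  have hset : {A : Fin 2 → Fin 2 → F | A ≠ 0 ∧ IsDoubleLine (webForm A)} =
      {A | A 0 = 0 ∧ A 1 ≠ 0} := by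
    ext A
    simp only [Set.mem_ofPred_eq, isDoubleLine_webForm_iff]
    exact and_iff_right_of_imp fun h hA => h.2 (hA ▸ rfl)
  have hq : 1 ≤ Fintype.card F := Fintype.card_pos
  apply eq_of_mul_card_units_eq (F := F)
  rw [numConics_o83Web_mul_card_units fun a h t ht => h.smul ht, hset, ncard_row_zero]
  zify [hq, Nat.one_le_pow 2 _ hq]
  ring

theorem numConics_o83Web_isRealPair :
    numConics (o83Web F) IsRealPair = Fintype.card F ^ 2 + Fintype.card F := by
  have hset : {A : Fin 2 → Fin 2 → F | A ≠ 0 ∧ IsRealPair (webForm A)} =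
      {A | A 0 ≠ 0 ∧ ¬ LinearIndependent F A} := by
    ext A
    simp only [Set.mem_ofPred_eq, isRealPair_webForm_iff]
    exact and_iff_right_of_imp fun h hA => h.1 (hA ▸ rfl)
  have hq : 1 ≤ Fintype.card F := Fintype.card_pos
  apply eq_of_mul_card_units_eq (F := F)
  rw [numConics_o83Web_mul_card_units fun a h t ht => h.smul ht, hset, ncard_dependent_rows]
  zify [hq, Nat.one_le_pow 2 _ hq]
  ring

theorem numConics_o83Web_isImagPair : numConics (o83Web F) IsImagPair = 0 := by
  rw [numConics, Set.ncard_eq_zero, Set.eq_empty_iff_forall_notMem]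
  rintro P ⟨a, -, haW, haT, -⟩
  obtain ⟨A, rfl⟩ : a ∈ Set.range webForm := by rwa [range_webForm]
  exact not_isImagPair_webForm A haT

theorem numConics_o83Web_isNonsingular :
    numConics (o83Web F) IsNonsingular = Fintype.card F ^ 3 - Fintype.card F := by
  have hset : {A : Fin 2 → Fin 2 → F | A ≠ 0 ∧ IsNonsingular (webForm A)} =
      {A | LinearIndependent F A} := by
    ext A
    simp only [Set.mem_ofPred_eq, IsNonsingular, ne_eq, disc_webForm_eq_zero_iff, not_not]
    exact and_iff_right_of_imp fun h hA => h.ne_zero 0 (hA ▸ rfl)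
  have hq : 1 ≤ Fintype.card F := Fintype.card_pos
  apply eq_of_mul_card_units_eq (F := F)
  rw [numConics_o83Web_mul_card_units fun a h t ht => h.smul ht, hset,
    ncard_linearIndependent_rows]
  zify [hq, Nat.one_le_pow 2 _ hq, Nat.le_self_pow two_ne_zero (Fintype.card F),
    Nat.le_self_pow three_ne_zero (Fintype.card F)]
  ring

end CharTwo

/-- conic counts of the web `(X0X1, X0X2, X1^2, X2^2)`
(line-orbit `o_{8,3}`), `q` even. -/
theorem web_o83_conic_counts (F : Type) [Field F] [Fintype F] (q : ℕ)
    (hq : Fintype.card F = q) (heven : Even q) (W : Submodule F (Fin 6 → F))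
    (hW : W = Submodule.span F ({![0, 1, 0, 0, 0, 0], ![0, 0, 1, 0, 0, 0],
      ![0, 0, 0, 1, 0, 0], ![0, 0, 0, 0, 0, 1]} : Set (Fin 6 → F))) :
    numConics W IsDoubleLine = q + 1 ∧
    numConics W IsRealPair = q ^ 2 + q ∧
    numConics W IsImagPair = 0 ∧
    numConics W IsNonsingular = q ^ 3 - q := by
  subst hq
  have : CharP F 2 := charP_two_of_even_card heven
  obtain rfl : W = o83Web F := hW
  exact ⟨numConics_o83Web_isDoubleLine, numConics_o83Web_isRealPair,
    numConics_o83Web_isImagPair, numConics_o83Web_isNonsingular⟩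

end Conics
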